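/- arXiv:1610.08909 — 3 statements merged into one kernel-verified Lean document; each statement's English description precedes it below -/
import Mathlib

section
/- For every ρ ∈ (−1, 1), the function g_ρ : ℝ → ℝ defined by g_ρ(u) = 1 − 2·Φ(−ρu/√(1−ρ²)) − u is monotone on ℝ (i.e., either nonincreasing or nondecreasing) if and only if ρ ≤ √(π/(2+π)); moreover, when ρ ≤ √(π/(2+π)) the function g_ρ is strictly decreasing on ℝ, and when ρ ∈ (√(π/(2+π)), 1) it is neither nonincreasing nor nondecreasing. -/
/-!
Write `g_ρ(u) = 1 - 2 Φ(-k u) - u` with `k = ρ / √(1 - ρ²)`, so that `g_ρ'(u) = 2 k φ(k u) - 1`.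
The standard normal density `φ` attains its maximum `1 / √(2π)` only at `0`; hence if
`2 k ≤ √(2π)` the derivative is negative off `u = 0` and `g_ρ` is strictly decreasing, while if
`2 k > √(2π)` then `g_ρ'(0) > 0` and `g_ρ` is not nonincreasing. It is never nondecreasing, since
`Φ` takes values in `[0, 1]` and the term `-u` dominates. Finally `2 k ≤ √(2π)` is equivalent to
`ρ ≤ √(π / (2 + π))`.
-/

open ProbabilityTheory Real Set

/-- The cumulative distribution function of the standard normal distribution `N(0,1)`. -/
noncomputable def stdNormCDF : ℝ → ℝ := fun x => ProbabilityTheory.cdf (gaussianReal 0 1) x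

open MeasureTheory
open scoped NNReal

lemma continuous_gaussianPDFReal (μ : ℝ) (v : ℝ≥0) : Continuous (gaussianPDFReal μ v) := by
  unfold gaussianPDFReal
  fun_prop

lemma gaussianPDFReal_self (μ : ℝ) (v : ℝ≥0) : gaussianPDFReal μ v μ = (√(2 * π * v))⁻¹ := by
  simp [gaussianPDFReal]

lemma gaussianPDFReal_lt_gaussianPDFReal_self {μ : ℝ} {v : ℝ≥0} (hv : v ≠ 0) {x : ℝ}
    (hx : x ≠ μ) : gaussianPDFReal μ v x < gaussianPDFReal μ v μ := by
  have hx' : 0 < (x - μ) ^ 2 := by positivity [sub_ne_zero.2 hx]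
  have hv' : (0 : ℝ) < 2 * v := by positivity
  simp only [gaussianPDFReal, sub_self]
  refine mul_lt_mul_of_pos_left (exp_lt_exp.2 (div_lt_div_of_pos_right ?_ hv')) (by positivity)
  simpa using hx'

lemma cdf_gaussianReal_eq_integral (μ : ℝ) {v : ℝ≥0} (hv : v ≠ 0) (x : ℝ) :
    cdf (gaussianReal μ v) x = ∫ t in Iic x, gaussianPDFReal μ v t := by
  rw [cdf_eq_real, measureReal_def, gaussianReal_apply_eq_integral μ hv,
    ENNReal.toReal_ofReal (integral_nonneg fun t => gaussianPDFReal_nonneg μ v t)]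

lemma hasDerivAt_cdf_gaussianReal (μ : ℝ) {v : ℝ≥0} (hv : v ≠ 0) (x : ℝ) :
    HasDerivAt (cdf (gaussianReal μ v)) (gaussianPDFReal μ v x) x := by
  have hIic := fun b : ℝ => (integrable_gaussianPDFReal μ v).integrableOn (s := Iic b)
  have h : ⇑(cdf (gaussianReal μ v)) =
      fun y => cdf (gaussianReal μ v) 0 + ∫ t in (0 : ℝ)..y, gaussianPDFReal μ v t := by
    ext y
    rw [cdf_gaussianReal_eq_integral μ hv, cdf_gaussianReal_eq_integral μ hv,
      ← intervalIntegral.integral_Iic_sub_Iic (hIic 0) (hIic y)]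
    ring
  rw [h]
  exact ((continuous_gaussianPDFReal μ v).integral_hasStrictDerivAt 0 x).hasDerivAt.const_add _

lemma hasDerivAt_stdNormCDF (x : ℝ) : HasDerivAt stdNormCDF (gaussianPDFReal 0 1 x) x :=
  hasDerivAt_cdf_gaussianReal 0 one_ne_zero x

lemma strictAnti_of_hasDerivAt_neg_of_ne {f f' : ℝ → ℝ} {a : ℝ}
    (hf : ∀ x, HasDerivAt f (f' x) x) (hf' : ∀ x ≠ a, f' x < 0) : StrictAnti f := by
  have hcont : Continuous f := continuous_iff_continuousAt.2 fun x => (hf x).continuousAt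
  refine StrictAntiOn.Iic_union_Ici (a := a) ?_ ?_
  · refine strictAntiOn_of_hasDerivWithinAt_neg (convex_Iic a) hcont.continuousOn
      (fun x _ => (hf x).hasDerivWithinAt) fun x hx => hf' x ?_
    rw [interior_Iic] at hx
    exact hx.ne
  · refine strictAntiOn_of_hasDerivWithinAt_neg (convex_Ici a) hcont.continuousOn
      (fun x _ => (hf x).hasDerivWithinAt) fun x hx => hf' x ?_
    rw [interior_Ici] at hx
    exact hx.ne'

/-- `g_ρ = thresholdPayoff (ρ / √(1 - ρ²))`. -/
noncomputable def thresholdPayoff (k u : ℝ) : ℝ := 1 - 2 * stdNormCDF (-k * u) - u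

lemma hasDerivAt_thresholdPayoff (k u : ℝ) :
    HasDerivAt (thresholdPayoff k) (2 * k * gaussianPDFReal 0 1 (-k * u) - 1) u := by
  have hΦ := (hasDerivAt_stdNormCDF (-k * u)).comp u ((hasDerivAt_id' u).const_mul (-k))
  refine (((hΦ.const_mul 2).const_sub 1).sub (hasDerivAt_id' u)).congr_deriv ?_
  ring

lemma strictAnti_thresholdPayoff {k : ℝ} (hk : 2 * k ≤ √(2 * π)) :
    StrictAnti (thresholdPayoff k) := by
  refine strictAnti_of_hasDerivAt_neg_of_ne (a := 0) (hasDerivAt_thresholdPayoff k) fun u hu => ?_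
  rcases le_or_gt k 0 with hk0 | hk0
  · nlinarith [gaussianPDFReal_nonneg 0 1 (-k * u)]
  · have hlt := gaussianPDFReal_lt_gaussianPDFReal_self one_ne_zero
      (x := -k * u) (μ := 0) (by simp [hk0.ne', hu])
    rw [gaussianPDFReal_self, NNReal.coe_one, mul_one] at hlt
    have : 2 * k * (√(2 * π))⁻¹ ≤ 1 := by
      rw [← div_eq_mul_inv, div_le_one (by positivity)]
      exact hk
    nlinarith

lemma not_antitone_thresholdPayoff {k : ℝ} (hk : √(2 * π) < 2 * k) :
    ¬Antitone (thresholdPayoff k) := fun h => by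
  have h0 := h.deriv_nonpos (x := 0)
  rw [(hasDerivAt_thresholdPayoff k 0).deriv, mul_zero, gaussianPDFReal_self, NNReal.coe_one,
    mul_one, sub_nonpos, ← div_eq_mul_inv, div_le_one (by positivity)] at h0
  exact h0.not_gt hk

lemma not_monotone_thresholdPayoff (k : ℝ) : ¬Monotone (thresholdPayoff k) := fun h => by
  have h03 := h (show (0 : ℝ) ≤ 3 by norm_num)
  simp only [thresholdPayoff, stdNormCDF] at h03
  linarith [cdf_le_one (gaussianReal 0 1) (-k * 0), cdf_nonneg (gaussianReal 0 1) (-k * 3)]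

lemma antitone_or_monotone_thresholdPayoff_iff (k : ℝ) :
    (Antitone (thresholdPayoff k) ∨ Monotone (thresholdPayoff k)) ↔ 2 * k ≤ √(2 * π) := by
  refine ⟨fun h => not_lt.1 fun hk => ?_, fun hk => .inl (strictAnti_thresholdPayoff hk).antitone⟩
  exact h.elim (not_antitone_thresholdPayoff hk) (not_monotone_thresholdPayoff k)

lemma two_mul_div_sqrt_one_sub_sq_le_sqrt_two_pi_iff {ρ : ℝ} (hρ : ρ ∈ Ioo (-1 : ℝ) 1) :
    2 * (ρ / √(1 - ρ ^ 2)) ≤ √(2 * π) ↔ ρ ≤ √(π / (2 + π)) := by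
  rcases le_or_gt ρ 0 with hρ0 | hρ0
  · have : ρ / √(1 - ρ ^ 2) ≤ 0 := div_nonpos_of_nonpos_of_nonneg hρ0 (sqrt_nonneg _)
    exact iff_of_true (by linarith [sqrt_nonneg (2 * π)]) (hρ0.trans (sqrt_nonneg _))
  · have h1 : 0 < 1 - ρ ^ 2 := by nlinarith [hρ.1, hρ.2]
    rw [le_sqrt' (by positivity), le_sqrt' hρ0, mul_pow, div_pow, sq_sqrt h1.le,
      le_div_iff₀ (by positivity), ← le_div_iff₀' (by norm_num), div_le_iff₀ h1]
    constructor <;> intro h <;> nlinarith [Real.pi_pos]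

/-- For every `ρ ∈ (−1, 1)`, the function `g_ρ(u) = 1 − 2·Φ(−ρu/√(1−ρ²)) − u` is monotone on `ℝ`
(either nonincreasing or nondecreasing) iff `ρ ≤ √(π/(2+π))`; when `ρ ≤ √(π/(2+π))` it is
strictly decreasing, and when `ρ ∈ (√(π/(2+π)), 1)` it is neither nonincreasing nor
nondecreasing. -/
theorem stmt_0 (ρ : ℝ) (hρ : ρ ∈ Set.Ioo (-1 : ℝ) 1)
    (g : ℝ → ℝ)
    (hg : ∀ u : ℝ, g u = 1 - 2 * stdNormCDF (-ρ * u / Real.sqrt (1 - ρ ^ 2)) - u) :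
    ((Antitone g ∨ Monotone g) ↔ ρ ≤ Real.sqrt (π / (2 + π))) ∧
      (ρ ≤ Real.sqrt (π / (2 + π)) → StrictAnti g) ∧
      (ρ ∈ Set.Ioo (Real.sqrt (π / (2 + π))) 1 → ¬Antitone g ∧ ¬Monotone g) := by
  have hgk : g = thresholdPayoff (ρ / √(1 - ρ ^ 2)) := funext fun u => by
    rw [hg, thresholdPayoff, mul_div_right_comm, neg_div]
  have hcrit := two_mul_div_sqrt_one_sub_sq_le_sqrt_two_pi_iff hρ
  subst hgk
  refine ⟨(antitone_or_monotone_thresholdPayoff_iff _).trans hcrit,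
    fun h => strictAnti_thresholdPayoff (hcrit.2 h), fun h => ⟨?_, not_monotone_thresholdPayoff _⟩⟩
  exact not_antitone_thresholdPayoff (not_le.1 fun h' => h.1.not_ge (hcrit.1 h'))
end

section
/- Let a, b ∈ ℝⁿ with aᵢ < bᵢ for all i, and let μ be a Borel probability measure on ℝⁿ that is absolutely continuous with respect to Lebesgue measure, whose density f vanishes outside the closed box ∏ᵢ[aᵢ, bᵢ] and is continuous and strictly positive on the open box ∏ᵢ(aᵢ, bᵢ). Then for every t ∈ ℝⁿ: if μ({x ∈ ℝⁿ : xᵢ ≤ tᵢ for all i}) = 0, then there exists an index i with μ({x ∈ ℝⁿ : xᵢ ≤ tᵢ}) = 0. -/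
/-!
If some `tᵢ ≤ aᵢ`, then on `{x | xᵢ ≤ tᵢ}` the density can be nonzero only on the Lebesgue-null
hyperplane `xᵢ = aᵢ`. Otherwise the orthant `{x | x ≤ t}` is a neighbourhood of a point of the
open box, where the density is continuous and positive, so the orthant has positive mass.
-/

open MeasureTheory Filter Topology Set

open scoped ENNReal

section WithDensity

variable {X : Type*} [MeasurableSpace X] (ν : Measure X)

theorem withDensity_ofReal_pos_of_continuousAt [TopologicalSpace X] [OpensMeasurableSpace X]
    [ν.IsOpenPosMeasure] {f : X → ℝ} {x : X} (hf : ContinuousAt f x) (hfx : 0 < f x)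
    {s : Set X} (hs : s ∈ 𝓝 x) : 0 < ν.withDensity (fun y => ENNReal.ofReal (f y)) s := by
  set V := interior (s ∩ {y | f x / 2 < f y})
  have hxV : x ∈ V := mem_interior_iff_mem_nhds.2 <|
    inter_mem hs (hf.eventually (lt_mem_nhds (half_lt_self hfx)))
  have hV : IsOpen V := isOpen_interior
  calc 0 < ENNReal.ofReal (f x / 2) * ν V :=
        ENNReal.mul_pos (by simpa using hfx) (hV.measure_pos ν ⟨x, hxV⟩).ne'
    _ = ∫⁻ _ in V, ENNReal.ofReal (f x / 2) ∂ν := (setLIntegral_const _ _).symm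
    _ ≤ ∫⁻ y in V, ENNReal.ofReal (f y) ∂ν :=
        setLIntegral_mono' hV.measurableSet fun y hy =>
          ENNReal.ofReal_le_ofReal (interior_subset hy).2.le
    _ = ν.withDensity (fun y => ENNReal.ofReal (f y)) V :=
        (withDensity_apply _ hV.measurableSet).symm
    _ ≤ _ := measure_mono (interior_subset.trans inter_subset_left)

theorem withDensity_apply_eq_zero_of_ae {g : X → ℝ≥0∞} {s : Set X} (hs : MeasurableSet s)
    (h : ∀ᵐ x ∂ν, x ∈ s → g x = 0) : ν.withDensity g s = 0 := by
  rw [withDensity_apply _ hs, setLIntegral_congr_fun_ae hs h, lintegral_zero]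

end WithDensity

theorem stmt_6_general (n : ℕ) (a b : Fin n → ℝ) (hab : ∀ i, a i < b i)
    (f : (Fin n → ℝ) → ℝ) (μ : Measure (Fin n → ℝ))
    (hμ : μ = volume.withDensity fun x => ENNReal.ofReal (f x))
    (hout : ∀ x ∉ Set.univ.pi fun i => Set.Icc (a i) (b i), f x = 0)
    (hcont : ContinuousOn f (Set.univ.pi fun i => Set.Ioo (a i) (b i)))
    (hpos : ∀ x ∈ Set.univ.pi fun i => Set.Ioo (a i) (b i), 0 < f x)
    (t : Fin n → ℝ)
    (h0 : μ {x | ∀ i, x i ≤ t i} = 0) :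
    ∃ i, μ {x | x i ≤ t i} = 0 := by
  subst hμ
  by_cases H : ∀ i, a i < t i
  · choose x₀ hx₀ using fun i => exists_between (lt_min (H i) (hab i))
    have hx₀box : x₀ ∈ univ.pi fun i => Ioo (a i) (b i) :=
      fun i _ => ⟨(hx₀ i).1, (hx₀ i).2.trans_le (min_le_right _ _)⟩
    have hbox : IsOpen (univ.pi fun i => Ioo (a i) (b i)) :=
      isOpen_set_pi finite_univ fun _ _ => isOpen_Ioo
    have horthant : {x | ∀ i, x i ≤ t i} ∈ 𝓝 x₀ := by
      simpa only [Set.pi, mem_univ, true_implies, mem_Iic] using set_pi_mem_nhds finite_univ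
        fun i _ => Iic_mem_nhds ((hx₀ i).2.trans_le (min_le_left _ _))
    exact absurd h0 (withDensity_ofReal_pos_of_continuousAt volume
      (hcont.continuousAt (hbox.mem_nhds hx₀box)) (hpos x₀ hx₀box) horthant).ne'
  · simp only [not_forall, not_lt] at H
    obtain ⟨i, hti⟩ := H
    refine ⟨i, withDensity_apply_eq_zero_of_ae volume
      (measurableSet_le (measurable_pi_apply i) measurable_const) ?_⟩
    filter_upwards [Measure.ae_eval_ne (fun _ => volume) i (a i)] with x hxa hxt
    have hx : x ∉ univ.pi fun i => Icc (a i) (b i) := fun hx =>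
      hxa (le_antisymm (hxt.trans hti) (hx i (mem_univ i)).1)
    rw [hout x hx, ENNReal.ofReal_zero]

/-- If `μ` is a Borel probability measure on `ℝⁿ` with density (w.r.t. Lebesgue measure) `f`
vanishing outside the closed box `∏ᵢ [aᵢ, bᵢ]` and continuous and strictly positive on the open
box `∏ᵢ (aᵢ, bᵢ)`, then a zero joint lower-orthant probability forces some marginal lower-tail
probability to be zero. -/
theorem stmt_6 (n : ℕ) (a b : Fin n → ℝ) (hab : ∀ i, a i < b i)
    (f : (Fin n → ℝ) → ℝ) (μ : Measure (Fin n → ℝ)) [IsProbabilityMeasure μ]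
    (hμ : μ = volume.withDensity fun x => ENNReal.ofReal (f x))
    (hout : ∀ x ∉ Set.univ.pi fun i => Set.Icc (a i) (b i), f x = 0)
    (hcont : ContinuousOn f (Set.univ.pi fun i => Set.Ioo (a i) (b i)))
    (hpos : ∀ x ∈ Set.univ.pi fun i => Set.Ioo (a i) (b i), 0 < f x)
    (t : Fin n → ℝ)
    (h0 : μ {x | ∀ i, x i ≤ t i} = 0) :
    ∃ i, μ {x | x i ≤ t i} = 0 :=
  stmt_6_general n a b hab f μ hμ hout hcont hpos t h0
end

section
/- Let (Ω, 𝓕, ℙ) be a probability space, let V : Ω → ℝ be measurable with distribution equal to the uniform distribution on [0, 1], let A ∈ 𝓕, and let φ : ℝ → [0, 1] be any Borel-measurable function such that φ ∘ V is a version of the conditional expectation E[1_A | σ(V)]. Then the nondecreasing function h : [0, 1] → [0, 1] defined by h(α) = ℙ(A ∩ {V ≤ α}) is differentiable at Lebesgue-almost every α ∈ (0, 1), with h′(α) = φ(α) for Lebesgue-almost every α ∈ (0, 1). -/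
/-!
Conditioning on `V` gives `P(A ∩ {V ∈ s}) = ∫_s φ d(law of V)` for every Borel `s`. Since `V` is
uniform, `h` is therefore the primitive `α ↦ ∫₀^α φ` of the integrable function `φ · 1_(0,1]`,
and the Lebesgue differentiation theorem gives `h′ = φ` almost everywhere on `(0, 1)`.
-/

open MeasureTheory Set

section Conditioning

variable {Ω β : Type*} [MeasurableSpace Ω] [MeasurableSpace β] {P : Measure Ω}
  {V : Ω → β} {φ : β → ℝ}

theorem integrable_map_of_comp_ae_eq_condExp (hV : Measurable V)
    (hφ : AEStronglyMeasurable φ (P.map V)) {f : Ω → ℝ}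
    (hver : φ ∘ V =ᵐ[P] P[f | MeasurableSpace.comap V inferInstance]) :
    Integrable φ (P.map V) :=
  (integrable_map_measure hφ hV.aemeasurable).2 (integrable_condExp.congr hver.symm)

theorem measureReal_inter_preimage_eq_setIntegral_map [IsFiniteMeasure P] (hV : Measurable V)
    {A : Set Ω} (hA : MeasurableSet A) (hφ : AEStronglyMeasurable φ (P.map V))
    (hver : φ ∘ V =ᵐ[P]
      P[A.indicator fun _ => (1 : ℝ) | MeasurableSpace.comap V inferInstance])
    {s : Set β} (hs : MeasurableSet s) :
    P.real (A ∩ V ⁻¹' s) = ∫ x in s, φ x ∂(P.map V) := by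
  calc P.real (A ∩ V ⁻¹' s)
      = ∫ ω in V ⁻¹' s, A.indicator (fun _ => (1 : ℝ)) ω ∂P := by
        rw [integral_indicator hA, setIntegral_const, smul_eq_mul, mul_one,
          measureReal_restrict_apply hA]
    _ = ∫ ω in V ⁻¹' s,
          (P[A.indicator fun _ => (1 : ℝ) | MeasurableSpace.comap V inferInstance]) ω ∂P :=
        (setIntegral_condExp hV.comap_le ((integrable_const 1).indicator hA) ⟨s, hs, rfl⟩).symm
    _ = ∫ ω in V ⁻¹' s, φ (V ω) ∂P :=
        setIntegral_congr_ae (hV hs) (hver.mono fun _ hω _ => hω.symm)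
    _ = ∫ x in s, φ x ∂(P.map V) := (setIntegral_map hs hφ hV.aemeasurable).symm

end Conditioning

theorem setIntegral_Iic_eq_intervalIntegral {E : Type*} [NormedAddCommGroup E]
    [NormedSpace ℝ E] {μ : Measure ℝ} {f : ℝ → E} (hf : Integrable f μ) {a : ℝ}
    (hfa : ∀ x ≤ a, f x = 0) (b : ℝ) :
    ∫ x in Iic b, f x ∂μ = ∫ x in a..b, f x ∂μ := by
  rw [← intervalIntegral.integral_Iic_sub_Iic hf.integrableOn hf.integrableOn,
    setIntegral_eq_zero_of_forall_eq_zero (t := Iic a) hfa, sub_zero]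

theorem stmt_11_general {Ω : Type*} [MeasurableSpace Ω] (P : Measure Ω) [IsProbabilityMeasure P]
    (V : Ω → ℝ) (hV : Measurable V)
    (hunif : P.map V = volume.restrict (Set.Icc (0 : ℝ) 1))
    (A : Set Ω) (hA : MeasurableSet A)
    (φ : ℝ → ℝ) (hφ : Measurable φ)
    (hver : φ ∘ V =ᵐ[P] P[A.indicator fun _ => (1 : ℝ) | MeasurableSpace.comap V inferInstance])
    (h : ℝ → ℝ) (hh : ∀ α : ℝ, h α = (P (A ∩ {ω | V ω ≤ α})).toReal) :
    ∀ᵐ α ∂(volume.restrict (Set.Ioo (0 : ℝ) 1)), HasDerivAt h (φ α) α := by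
  -- `Ioc` rather than `Icc`, so that `ψ` below vanishes on all of `Iic 0`.
  have hlaw : P.map V = volume.restrict (Ioc 0 1) :=
    hunif.trans (Measure.restrict_congr_set Ioc_ae_eq_Icc).symm
  have hφint : Integrable φ (P.map V) :=
    integrable_map_of_comp_ae_eq_condExp hV hφ.aestronglyMeasurable hver
  rw [hlaw] at hφint
  set ψ := (Ioc (0 : ℝ) 1).indicator φ
  have hψint : Integrable ψ := (integrable_indicator_iff measurableSet_Ioc).2 hφint
  have h_primitive : h = fun α => ∫ x in 0..α, ψ x := by
    funext α
    rw [hh, ← measureReal_def]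
    change P.real (A ∩ V ⁻¹' Iic α) = _
    rw [measureReal_inter_preimage_eq_setIntegral_map hV hA hφ.aestronglyMeasurable hver
        measurableSet_Iic, hlaw, Measure.restrict_restrict measurableSet_Iic,
      ← setIntegral_indicator measurableSet_Ioc]
    exact setIntegral_Iic_eq_intervalIntegral hψint
      (fun x hx => indicator_of_notMem (fun hx' => hx'.1.not_ge hx) φ) α
  filter_upwards
    [ae_restrict_of_ae (LocallyIntegrable.ae_hasDerivAt_integral hψint.locallyIntegrable),
    ae_restrict_mem measurableSet_Ioo] with α hderiv hα
  rw [h_primitive, ← indicator_of_mem (Ioo_subset_Ioc_self hα) φ]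
  exact hderiv 0

/-- If `V` is uniform on `[0,1]`, `A` is an event, and `φ ∘ V` is a version of
`E[1_A | σ(V)]`, then `h(α) = P(A ∩ {V ≤ α})` is differentiable at Lebesgue-a.e.
`α ∈ (0,1)` with `h′(α) = φ(α)`. -/
theorem stmt_11 {Ω : Type*} [MeasurableSpace Ω] (P : Measure Ω) [IsProbabilityMeasure P]
    (V : Ω → ℝ) (hV : Measurable V)
    (hunif : P.map V = volume.restrict (Set.Icc (0 : ℝ) 1))
    (A : Set Ω) (hA : MeasurableSet A)
    (φ : ℝ → ℝ) (hφ : Measurable φ) (hφ01 : ∀ v, φ v ∈ Set.Icc (0 : ℝ) 1)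
    (hver : φ ∘ V =ᵐ[P] P[A.indicator fun _ => (1 : ℝ) | MeasurableSpace.comap V inferInstance])
    (h : ℝ → ℝ) (hh : ∀ α : ℝ, h α = (P (A ∩ {ω | V ω ≤ α})).toReal) :
    ∀ᵐ α ∂(volume.restrict (Set.Ioo (0 : ℝ) 1)), HasDerivAt h (φ α) α :=
  stmt_11_general P V hV hunif A hA φ hφ hver h hh
end
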